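/- arXiv:1711.08656 — 5 statements merged into one kernel-verified Lean document; each statement's English description precedes it below -/
import Mathlib

section
/- Let κ > 1 be a cardinal and X a topological space. Then the following are equivalent: (i) X is κ-collectionwise normal; (ii) for every closed subspace A of X and every continuous map f : A → MJ(κ), there exists a continuous map F : X → MJ(κ) with F|_A = f. -/
open Set Topology Cardinal

universe u v

/-- The equivalence relation on `[0,1] × I` identifying all points with first coordinate `0`. -/
def hedgehogSetoid (I : Type u) : Setoid (Set.Icc (0:ℝ) 1 × I) where
  r p q := ((p.1 : ℝ) = 0 ∧ (q.1 : ℝ) = 0) ∨ p = q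
  iseqv := by
    refine ⟨fun p => Or.inr rfl, ?_, ?_⟩
    · rintro p q (⟨h1, h2⟩ | rfl)
      · exact Or.inl ⟨h2, h1⟩
      · exact Or.inr rfl
    · rintro p q r (⟨h1, h2⟩ | rfl) hqr
      · rcases hqr with ⟨h3, h4⟩ | rfl
        · exact Or.inl ⟨h1, h4⟩
        · exact Or.inl ⟨h1, h2⟩
      · exact hqr

/-- The hedgehog with spines indexed by `I`, as a set (quotient of `[0,1] × I`). -/
abbrev Hedgehog (I : Type u) := Quotient (hedgehogSetoid I)

/-- The product topology on `[0,1] × I`, where `[0,1]` carries the usual topology and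
`I` carries the discrete topology. -/
def hedgehogBaseTop (I : Type u) : TopologicalSpace (Set.Icc (0:ℝ) 1 × I) :=
  @instTopologicalSpaceProd _ _ inferInstance ⊥

/-- The quotient topology on the hedgehog: the quotient hedgehog `J(κ)`. -/
def quotHedgehogTop (I : Type u) : TopologicalSpace (Hedgehog I) :=
  TopologicalSpace.coinduced (Quotient.mk (hedgehogSetoid I)) (hedgehogBaseTop I)

/-- The projection `π_κ : J(κ) → [0,1]`, sending `(t, j)` to `t`. -/
def hedgehogPiKappa {I : Type u} : Hedgehog I → Set.Icc (0:ℝ) 1 :=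
  Quotient.lift Prod.fst (by
    rintro p q (⟨h1, h2⟩ | rfl)
    · exact Subtype.ext (h1.trans h2.symm)
    · rfl)

open Classical in
/-- The projection `π_i : J(κ) → [0,1]`, sending `(t, j)` to `t` if `j = i` and to `0`
otherwise. -/
noncomputable def hedgehogProj {I : Type u} (i : I) : Hedgehog I → Set.Icc (0:ℝ) 1 :=
  Quotient.lift (fun p => if p.2 = i then p.1 else ⟨0, by norm_num⟩) (by
    rintro p q (⟨h1, h2⟩ | rfl)
    · have hp : p.1 = (⟨0, by norm_num⟩ : Set.Icc (0:ℝ) 1) := Subtype.ext h1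
      have hq : q.1 = (⟨0, by norm_num⟩ : Set.Icc (0:ℝ) 1) := Subtype.ext h2
      try dsimp only
      split_ifs <;> simp [hp, hq]
    · rfl)

open Classical in
/-- The hedgehog metric: `d((t,i),(s,j)) = |t - s|` if `i = j` and `t + s` otherwise.
(It is defined via representatives; the formula does not depend on the choice of
representatives.) -/
noncomputable def hedgehogDist {I : Type u} (x y : Hedgehog I) : ℝ :=
  if x.out.2 = y.out.2 then |(x.out.1 : ℝ) - (y.out.1 : ℝ)|
  else (x.out.1 : ℝ) + (y.out.1 : ℝ)

/-- The metric hedgehog `MJ(κ)`: the hedgehog equipped with the hedgehog metric. -/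
noncomputable def metricHedgehog (I : Type u) : MetricSpace (Hedgehog I) where
  dist := hedgehogDist
  dist_self := by
    intro x
    show hedgehogDist x x = 0
    unfold hedgehogDist
    rw [if_pos rfl, sub_self, abs_zero]
  dist_comm := by
    intro x y
    show hedgehogDist x y = hedgehogDist y x
    unfold hedgehogDist
    rcases eq_or_ne x.out.2 y.out.2 with h | h
    · rw [if_pos h, if_pos h.symm, abs_sub_comm]
    · rw [if_neg h, if_neg (Ne.symm h), add_comm]
  dist_triangle := by
    intro x y z
    show hedgehogDist x z ≤ hedgehogDist x y + hedgehogDist y z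
    unfold hedgehogDist
    have hx0 : (0:ℝ) ≤ x.out.1 := x.out.1.2.1
    have hy0 : (0:ℝ) ≤ y.out.1 := y.out.1.2.1
    have hz0 : (0:ℝ) ≤ z.out.1 := z.out.1.2.1
    have hxy : |(x.out.1:ℝ) - y.out.1| ≤ (x.out.1:ℝ) + y.out.1 :=
      abs_le.mpr ⟨by linarith, by linarith⟩
    have hyz : |(y.out.1:ℝ) - z.out.1| ≤ (y.out.1:ℝ) + z.out.1 :=
      abs_le.mpr ⟨by linarith, by linarith⟩
    have hxz : |(x.out.1:ℝ) - z.out.1| ≤ (x.out.1:ℝ) + z.out.1 :=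
      abs_le.mpr ⟨by linarith, by linarith⟩
    have htri := abs_sub_le (x.out.1:ℝ) (y.out.1:ℝ) (z.out.1:ℝ)
    have h1 := le_abs_self ((x.out.1:ℝ) - y.out.1)
    have h2 := neg_abs_le ((x.out.1:ℝ) - y.out.1)
    have h3 := le_abs_self ((y.out.1:ℝ) - z.out.1)
    have h4 := neg_abs_le ((y.out.1:ℝ) - z.out.1)
    split_ifs <;> try linarith
    all_goals simp_all
  eq_of_dist_eq_zero := by
    intro x y h
    replace h : hedgehogDist x y = 0 := h
    unfold hedgehogDist at h
    have hx0 : (0:ℝ) ≤ x.out.1 := x.out.1.2.1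
    have hy0 : (0:ℝ) ≤ y.out.1 := y.out.1.2.1
    rw [← Quotient.out_eq x, ← Quotient.out_eq y]
    split_ifs at h with hc
    · have h1 : (x.out.1:ℝ) = y.out.1 := by
        have := abs_eq_zero.mp h
        linarith
      have : x.out = y.out := Prod.ext (Subtype.ext h1) hc
      rw [this]
    · exact Quotient.sound (Or.inl ⟨by linarith, by linarith⟩)

/-- The topology of the metric hedgehog `MJ(κ)`. -/
noncomputable def metricHedgehogTop (I : Type u) : TopologicalSpace (Hedgehog I) :=
  (metricHedgehog I).toUniformSpace.toTopologicalSpace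

/-- The bijection `Φ` from the hedgehog onto the axes `L(κ)` of the cube `[0,1]^I`,
viewed as a map into the cube: `Φ(t,i)(j) = t` if `j = i` and `0` otherwise. -/
noncomputable def hedgehogPhi {I : Type u} : Hedgehog I → (I → Set.Icc (0:ℝ) 1) :=
  fun x j => hedgehogProj j x

/-- The topology of the compact hedgehog `ΛJ(κ)`: the topology transported along `Φ`
from the subspace `L(κ)` of the Tychonoff cube `[0,1]^I`, i.e. the topology induced by `Φ`
from the product topology. -/
noncomputable def compactHedgehogTop (I : Type u) : TopologicalSpace (Hedgehog I) :=
  TopologicalSpace.induced hedgehogPhi inferInstance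

/-- The weight of a topological space: the minimum cardinality of a basis of its topology. -/
noncomputable def weight (X : Type u) [TopologicalSpace X] : Cardinal.{u} :=
  sInf { c : Cardinal.{u} | ∃ B : Set (Set X), TopologicalSpace.IsTopologicalBasis B ∧ #B = c }

/-- A family `A` of subsets of a topological space is discrete if every point has a
neighborhood meeting `A i` for at most one index `i`. -/
def IsDiscreteFamily {X : Type*} [TopologicalSpace X] {ι : Type*} (A : ι → Set X) : Prop :=
  ∀ x : X, ∃ N ∈ nhds x, { i | (A i ∩ N).Nonempty }.Subsingleton

/-- A set-indexed family of subsets of a topological space is discrete if every point has a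
neighborhood meeting at most one member of the family. -/
def IsDiscreteSetFamily {X : Type*} [TopologicalSpace X] (𝒜 : Set (Set X)) : Prop :=
  ∀ x : X, ∃ N ∈ nhds x, { A ∈ 𝒜 | (A ∩ N).Nonempty }.Subsingleton

/-- A topological space `X` is `κ`-collectionwise normal if every discrete family of closed
sets indexed by a set of cardinality `κ` can be separated by a pairwise disjoint family of
open sets. -/
def IsCollectionwiseNormalWrt (κ : Cardinal.{u}) (X : Type v) [TopologicalSpace X] : Prop :=
  ∀ (ι : Type u) (F : ι → Set X), #ι = κ → (∀ i, IsClosed (F i)) → IsDiscreteFamily F →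
    ∃ U : ι → Set X, (∀ i, IsOpen (U i)) ∧ (Pairwise fun i j => Disjoint (U i) (U j)) ∧
      ∀ i, F i ⊆ U i

/-- A topological space is completely metrizable if its topology is induced by some
complete metric. -/
def IsCompletelyMetrizable (X : Type*) [t : TopologicalSpace X] : Prop :=
  ∃ m : MetricSpace X, m.toUniformSpace.toTopologicalSpace = t ∧
    @CompleteSpace X m.toUniformSpace

/-!
If maps into `MJ(κ)` extend, extend the map sending the `i`-th member of a discrete closed family
to the tip of the `i`-th spine; as the tips are at mutual distance `2`, the preimages of the unit
balls around them separate the family.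

Conversely, let `f : A → MJ(κ)`. For each `n` the sets `{a | 1/(n+1) ≤ π_i (f a)}` form a discrete
family of closed subsets of `X`; collectionwise normality at every level `n`, followed by the usual
removal of the closures of the other families at the earlier levels, gives pairwise disjoint open
sets `W i ⊇ {a | 0 < π_i (f a)}`. Extend each coordinate `π_i ∘ f` to `r i`, and the radius
`π_κ ∘ f` to `g` vanishing off `⋃ i, W i` (Tietze). The extension runs along the `i`-th spine on
`W i`, at height `min (r i) g`.
-/

namespace IsDiscreteFamily

variable {X : Type*} [TopologicalSpace X] {ι : Type*} {A : ι → Set X}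

theorem locallyFinite (h : IsDiscreteFamily A) : LocallyFinite A :=
  fun x => (h x).imp fun _ hN => ⟨hN.1, hN.2.finite⟩

theorem mono {B : ι → Set X} (h : IsDiscreteFamily A) (hBA : ∀ i, B i ⊆ A i) :
    IsDiscreteFamily B :=
  fun x => (h x).imp fun N hN =>
    ⟨hN.1, hN.2.anti fun _ hi => hi.mono (inter_subset_inter_left N (hBA _))⟩

theorem eq_of_mem (h : IsDiscreteFamily A) {x : X} {i j : ι} (hi : x ∈ A i) (hj : x ∈ A j) :
    i = j :=
  let ⟨_, hN, hsub⟩ := h x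
  hsub ⟨x, hi, mem_of_mem_nhds hN⟩ ⟨x, hj, mem_of_mem_nhds hN⟩

theorem closure_biUnion (h : IsDiscreteFamily A) (s : Set ι) :
    closure (⋃ i ∈ s, A i) = ⋃ i ∈ s, closure (A i) := by
  simpa only [iUnion_subtype, Function.comp_apply] using
    (h.locallyFinite.comp_injective (Subtype.val_injective (p := (· ∈ s)))).closure_iUnion

theorem preimage {Y : Type*} [TopologicalSpace Y] {B : ι → Set Y} (h : IsDiscreteFamily B)
    {f : X → Y} (hf : Continuous f) : IsDiscreteFamily fun i => f ⁻¹' B i := fun x =>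
  let ⟨N, hN, hsub⟩ := h (f x)
  ⟨f ⁻¹' N, hf.continuousAt hN, hsub.anti fun _ ⟨y, hyB, hyN⟩ => ⟨f y, hyB, hyN⟩⟩

theorem image_of_isClosedEmbedding {Y : Type*} [TopologicalSpace Y] {B : ι → Set Y}
    (h : IsDiscreteFamily B) {e : Y → X} (he : IsClosedEmbedding e) :
    IsDiscreteFamily fun i => e '' B i := by
  intro x
  by_cases hx : x ∈ range e
  · obtain ⟨y, rfl⟩ := hx
    obtain ⟨N, hN, hsub⟩ := h y
    rw [he.isInducing.nhds_eq_comap] at hN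
    obtain ⟨M, hM, hMN⟩ := Filter.mem_comap.mp hN
    exact ⟨M, hM, hsub.anti fun _ ⟨_, ⟨z, hzB, rfl⟩, hzM⟩ => ⟨z, hzB, hMN hzM⟩⟩
  · refine ⟨(range e)ᶜ, he.isClosed_range.isOpen_compl.mem_nhds hx, ?_⟩
    rintro _ ⟨_, ⟨z, -, rfl⟩, hz⟩
    exact (hz (mem_range_self z)).elim

theorem continuous_of_forall_mem_eq (h : IsDiscreteFamily A) {Y : Type*} [TopologicalSpace Y]
    {φ : (⋃ i, A i) → Y} (c : ι → Y) (hφ : ∀ (a : ⋃ i, A i) i, (a : X) ∈ A i → φ a = c i) :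
    Continuous φ := by
  refine continuous_iff_continuousAt.mpr fun a => ?_
  obtain ⟨i, hai⟩ := mem_iUnion.mp a.2
  obtain ⟨N, hN, hsub⟩ := h a
  have hφa : φ =ᶠ[𝓝 a] fun _ => c i := by
    filter_upwards [continuous_subtype_val.continuousAt.preimage_mem_nhds hN] with b hb
    obtain ⟨j, hbj⟩ := mem_iUnion.mp b.2
    rw [hφ b j hbj, hsub ⟨b, hbj, hb⟩ ⟨a, hai, mem_of_mem_nhds hN⟩]
  exact continuousAt_const.congr hφa.symm

end IsDiscreteFamily

theorem LocallyFinite.isDiscreteFamily {X : Type*} [TopologicalSpace X] {ι : Type*}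
    {A : ι → Set X} (hA : LocallyFinite A) (hc : ∀ i, IsClosed (A i))
    (hd : Pairwise fun i j => Disjoint (A i) (A j)) : IsDiscreteFamily A := by
  intro x
  refine ⟨_, hA.iInter_compl_mem_nhds hc x, fun i ⟨y, hyi, hy⟩ j ⟨z, hzj, hz⟩ => ?_⟩
  have hx : ∀ k, ∀ w ∈ A k, w ∈ ⋂ (k) (_ : x ∉ A k), (A k)ᶜ → x ∈ A k := fun k w hw hwN =>
    by_contra fun hxk => mem_iInter₂.mp hwN k hxk hw
  exact hd.eq (not_disjoint_iff.mpr ⟨x, hx i y hyi hy, hx j z hzj hz⟩)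

section Tietze

variable {X : Type*} [TopologicalSpace X] [NormalSpace X] {A : Set X}

theorem IsClosed.exists_continuous_extension (hA : IsClosed A) {φ : A → ℝ} (hφ : Continuous φ) :
    ∃ g : X → ℝ, Continuous g ∧ ∀ a : A, g a = φ a :=
  let ⟨g, hg⟩ := ContinuousMap.exists_restrict_eq hA ⟨φ, hφ⟩
  ⟨g, g.continuous, fun a => DFunLike.congr_fun hg a⟩

theorem IsClosed.exists_continuous_extension_eq_zero_off (hA : IsClosed A) {W : Set X}
    (hW : IsOpen W) {φ : A → ℝ} (hφ : Continuous φ) (hφW : ∀ a : A, (a : X) ∉ W → φ a = 0) :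
    ∃ g : X → ℝ, Continuous g ∧ (∀ a : A, g a = φ a) ∧ ∀ x ∉ W, g x = 0 := by
  obtain ⟨φ₁, hφ₁, hφ₁A⟩ := hA.exists_continuous_extension hφ
  have hA' : EqOn (W.indicator φ₁) φ₁ A := fun x hx => by
    by_cases hxW : x ∈ W
    · exact indicator_of_mem hxW φ₁
    · rw [indicator_of_notMem hxW, hφ₁A ⟨x, hx⟩, hφW ⟨x, hx⟩ hxW]
  have hW' : EqOn (W.indicator φ₁) 0 Wᶜ := fun x hx => indicator_of_notMem hx φ₁
  have hK : ContinuousOn (W.indicator φ₁) (A ∪ Wᶜ) :=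
    (hφ₁.continuousOn.congr hA').union_of_isClosed (continuousOn_const.congr hW') hA
      hW.isClosed_compl
  obtain ⟨g, hg, hgK⟩ := (hA.union hW.isClosed_compl).exists_continuous_extension
    (continuousOn_iff_continuous_domRestrict.mp hK)
  refine ⟨g, hg, fun a => ?_, fun x hx => ?_⟩
  · rw [hgK ⟨a, Or.inl a.2⟩, domRestrict_apply, hA' a.2, hφ₁A]
  · rw [hgK ⟨x, Or.inr hx⟩, domRestrict_apply, hW' hx, Pi.zero_apply]

end Tietze

namespace IsCollectionwiseNormalWrt

variable {κ : Cardinal.{u}} {X : Type v} [TopologicalSpace X] {I : Type u}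

theorem normalSpace (hκ : 1 < κ) (h : IsCollectionwiseNormalWrt κ X) : NormalSpace X := by
  classical
  refine ⟨fun s t hs ht hst => ?_⟩
  have : Nontrivial κ.out := Cardinal.one_lt_iff_nontrivial.mp (by rwa [Cardinal.mk_out])
  obtain ⟨i, j, hij⟩ := exists_pair_ne κ.out
  let F : κ.out → Set X := fun k => if k = i then s else if k = j then t else ∅
  have hFc : ∀ k, IsClosed (F k) := fun k => by
    dsimp only [F]; split_ifs
    exacts [hs, ht, isClosed_empty]
  have hFd : Pairwise fun k l => Disjoint (F k) (F l) := fun k l hkl => by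
    dsimp only [F]; split_ifs <;> simp_all [disjoint_comm]
  have hFf : LocallyFinite F := fun _ => ⟨univ, Filter.univ_mem, (toFinite {i, j}).subset
    fun k ⟨x, hx, _⟩ => by dsimp only [F] at hx; split_ifs at hx <;> simp_all⟩
  obtain ⟨U, hUo, hUd, hFU⟩ := h κ.out F κ.mk_out hFc (hFf.isDiscreteFamily hFc hFd)
  exact ⟨U i, U j, hUo i, hUo j, by simpa [F] using hFU i, by simpa [F, hij.symm] using hFU j,
    hUd hij⟩

theorem exists_isDiscreteFamily_isOpen_superset [NormalSpace X]
    (h : IsCollectionwiseNormalWrt κ X) (hI : #I = κ) {C : I → Set X} (hC : ∀ i, IsClosed (C i))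
    (hd : IsDiscreteFamily C) :
    ∃ V : I → Set X, (∀ i, IsOpen (V i)) ∧ IsDiscreteFamily V ∧ ∀ i, C i ⊆ V i := by
  obtain ⟨Y, hYo, hYd, hCY⟩ := h I C hI hC hd
  obtain ⟨O, hOo, hCO, hOY⟩ := normal_exists_closure_subset (hd.locallyFinite.isClosed_iUnion hC)
    (isOpen_iUnion hYo) (iUnion_mono hCY)
  refine ⟨fun i => Y i ∩ O, fun i => (hYo i).inter hOo, fun x => ?_,
    fun i => subset_inter (hCY i) ((subset_iUnion C i).trans hCO)⟩
  by_cases hx : x ∈ closure O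
  · obtain ⟨j, hj⟩ := mem_iUnion.mp (hOY hx)
    refine ⟨Y j, (hYo j).mem_nhds hj, (subsingleton_singleton (a := j)).anti ?_⟩
    exact fun i ⟨y, hyi, hyj⟩ => hYd.eq (not_disjoint_iff.mpr ⟨y, hyi.1, hyj⟩)
  · refine ⟨(closure O)ᶜ, isClosed_closure.isOpen_compl.mem_nhds hx, ?_⟩
    rintro i ⟨y, hy, hyO⟩
    exact (hyO (subset_closure hy.2)).elim

theorem exists_isOpen_pairwise_disjoint_of_seq [NormalSpace X] (h : IsCollectionwiseNormalWrt κ X)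
    (hI : #I = κ) {C : ℕ → I → Set X} (hC : ∀ n i, IsClosed (C n i))
    (hd : ∀ n, IsDiscreteFamily (C n))
    (hsep : ∀ n i, Disjoint (C n i) (closure (⋃ m, ⋃ k ∈ ({i}ᶜ : Set I), C m k))) :
    ∃ W : I → Set X, (∀ i, IsOpen (W i)) ∧ (Pairwise fun i j => Disjoint (W i) (W j)) ∧
      ∀ n i, C n i ⊆ W i := by
  have hV : ∀ n, ∃ V : I → Set X, (∀ i, IsOpen (V i)) ∧ IsDiscreteFamily V ∧
      ∀ i, C n i ⊆ V i ∧ Disjoint (closure (V i)) (closure (⋃ m, ⋃ k ∈ ({i}ᶜ : Set I), C m k)) := by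
    intro n
    obtain ⟨V, hVo, hVd, hCV⟩ := h.exists_isDiscreteFamily_isOpen_superset hI (hC n) (hd n)
    have hG : ∀ i, ∃ G, IsOpen G ∧ C n i ⊆ G ∧
        closure G ⊆ (closure (⋃ m, ⋃ k ∈ ({i}ᶜ : Set I), C m k))ᶜ := fun i =>
      normal_exists_closure_subset (hC n i) isClosed_closure.isOpen_compl
        (subset_compl_iff_disjoint_right.mpr (hsep n i))
    choose G hGo hCG hGcl using hG
    exact ⟨fun i => V i ∩ G i, fun i => (hVo i).inter (hGo i), hVd.mono fun i => inter_subset_left,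
      fun i => ⟨subset_inter (hCV i) (hCG i),
        disjoint_compl_left.mono_left ((closure_mono inter_subset_right).trans (hGcl i))⟩⟩
  choose V hVo hVd hCV hVsep using hV
  let T : I → ℕ → Set X := fun i n => ⋃ m ≤ n, closure (⋃ k ∈ ({i}ᶜ : Set I), V m k)
  have hVT : ∀ {i j n n'}, i ≠ j → n ≤ n' → V n i ⊆ T j n' := fun hij hnn' x hx =>
    mem_biUnion hnn' (subset_closure (mem_biUnion hij hx))
  refine ⟨fun i => ⋃ n, (V n i \ T i n), fun i => isOpen_iUnion fun n => (hVo n i).sdiff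
    ((finite_le_nat n).isClosed_biUnion fun _ _ => isClosed_closure), fun i j hij => ?_, ?_⟩
  · refine disjoint_left.mpr fun x hxi hxj => ?_
    obtain ⟨n, hxn, hxT⟩ := mem_iUnion.mp hxi
    obtain ⟨n', hxn', hxT'⟩ := mem_iUnion.mp hxj
    rcases le_total n n' with hnn' | hn'n
    · exact hxT' (hVT hij hnn' hxn)
    · exact hxT (hVT (Ne.symm hij) hn'n hxn')
  · intro n i x hx
    refine mem_iUnion.mpr ⟨n, hCV n i hx, fun hxT => ?_⟩
    obtain ⟨m, -, hm⟩ := mem_iUnion₂.mp hxT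
    rw [(hVd m).closure_biUnion] at hm
    obtain ⟨k, hk, hxk⟩ := mem_iUnion₂.mp hm
    exact disjoint_left.mp (hVsep m k) hxk (subset_closure (mem_iUnion.mpr
      ⟨n, mem_biUnion (Ne.symm hk) hx⟩))

end IsCollectionwiseNormalWrt

section Hedgehog

variable {I : Type u}

noncomputable local instance : MetricSpace (Hedgehog I) := metricHedgehog I

/-- The point at height `t` on the spine `i`, with `t` clamped to `[0,1]`. -/
noncomputable def hedgehogMk (t : ℝ) (i : I) : Hedgehog I :=
  Quotient.mk (hedgehogSetoid I) (projIcc 0 1 zero_le_one t, i)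

open Classical in
theorem hedgehogDist_mk (p q : Icc (0:ℝ) 1 × I) :
    dist (Quotient.mk (hedgehogSetoid I) p) (Quotient.mk (hedgehogSetoid I) q) =
      if p.2 = q.2 then |(p.1 : ℝ) - q.1| else (p.1 : ℝ) + q.1 := by
  change hedgehogDist _ _ = _
  have hp0 : (0:ℝ) ≤ p.1 := p.1.2.1
  have hq0 : (0:ℝ) ≤ q.1 := q.1.2.1
  unfold hedgehogDist
  rcases Quotient.mk_out (s := hedgehogSetoid I) p with ⟨hp1, hp2⟩ | hp <;>
    rcases Quotient.mk_out (s := hedgehogSetoid I) q with ⟨hq1, hq2⟩ | hq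
  · split_ifs <;> simp [hp1, hq1, hp2, hq2]
  · rw [hq]; split_ifs <;> simp [hp1, hp2, abs_of_nonneg hq0]
  · rw [hp]; split_ifs <;> simp [hq1, hq2, abs_of_nonneg hp0]
  · rw [hp, hq]

theorem hedgehogDist_mk_le (p q : Icc (0:ℝ) 1 × I) :
    dist (Quotient.mk (hedgehogSetoid I) p) (Quotient.mk (hedgehogSetoid I) q) ≤
      (p.1 : ℝ) + q.1 := by
  have hp0 : (0:ℝ) ≤ p.1 := p.1.2.1
  have hq0 : (0:ℝ) ≤ q.1 := q.1.2.1
  rw [hedgehogDist_mk]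
  split_ifs
  · exact abs_sub_le_iff.mpr ⟨by linarith, by linarith⟩
  · exact le_rfl

open Classical in
theorem hedgehogProj_mk (i : I) (p : Icc (0:ℝ) 1 × I) :
    hedgehogProj i (Quotient.mk (hedgehogSetoid I) p) = if p.2 = i then p.1 else ⟨0, by norm_num⟩ :=
  rfl

theorem hedgehogPiKappa_mk (p : Icc (0:ℝ) 1 × I) :
    hedgehogPiKappa (Quotient.mk (hedgehogSetoid I) p) = p.1 :=
  rfl

theorem abs_hedgehogProj_sub_le (i : I) (x y : Hedgehog I) :
    |(hedgehogProj i x : ℝ) - hedgehogProj i y| ≤ dist x y := by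
  induction x using Quotient.ind with | _ p =>
  induction y using Quotient.ind with | _ q =>
  have hp0 : (0:ℝ) ≤ p.1 := p.1.2.1
  have hq0 : (0:ℝ) ≤ q.1 := q.1.2.1
  rw [hedgehogDist_mk, hedgehogProj_mk, hedgehogProj_mk]
  split_ifs <;> simp_all [abs_le] <;> linarith

theorem abs_hedgehogPiKappa_sub_le (x y : Hedgehog I) :
    |(hedgehogPiKappa x : ℝ) - hedgehogPiKappa y| ≤ dist x y := by
  induction x using Quotient.ind with | _ p =>
  induction y using Quotient.ind with | _ q =>
  have hp0 : (0:ℝ) ≤ p.1 := p.1.2.1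
  have hq0 : (0:ℝ) ≤ q.1 := q.1.2.1
  rw [hedgehogDist_mk, hedgehogPiKappa_mk, hedgehogPiKappa_mk]
  split_ifs
  · exact le_rfl
  · exact abs_sub_le_iff.mpr ⟨by linarith, by linarith⟩

theorem continuous_hedgehogProj (i : I) : Continuous fun x : Hedgehog I => (hedgehogProj i x : ℝ) :=
  LipschitzWith.continuous (K := 1) <| .of_dist_le_mul fun x y => by
    simpa [Real.dist_eq] using abs_hedgehogProj_sub_le i x y

theorem continuous_hedgehogPiKappa : Continuous fun x : Hedgehog I => (hedgehogPiKappa x : ℝ) :=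
  LipschitzWith.continuous (K := 1) <| .of_dist_le_mul fun x y => by
    simpa [Real.dist_eq] using abs_hedgehogPiKappa_sub_le x y

theorem hedgehogProj_le_hedgehogPiKappa (i : I) (x : Hedgehog I) :
    (hedgehogProj i x : ℝ) ≤ hedgehogPiKappa x := by
  induction x using Quotient.ind with | _ p =>
  rw [hedgehogProj_mk, hedgehogPiKappa_mk]
  split_ifs
  · exact le_rfl
  · exact p.1.2.1

theorem exists_hedgehogProj_eq_hedgehogPiKappa (x : Hedgehog I) :
    ∃ i, hedgehogProj i x = hedgehogPiKappa x := by
  induction x using Quotient.ind with | _ p =>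
  exact ⟨p.2, by rw [hedgehogProj_mk, if_pos rfl, hedgehogPiKappa_mk]⟩

theorem hedgehogProj_eq_zero_or {i j : I} (hij : i ≠ j) (x : Hedgehog I) :
    (hedgehogProj i x : ℝ) = 0 ∨ (hedgehogProj j x : ℝ) = 0 := by
  induction x using Quotient.ind with | _ p =>
  rw [hedgehogProj_mk, hedgehogProj_mk]
  by_cases hi : p.2 = i
  · exact Or.inr (by rw [if_neg (hi ▸ hij)])
  · exact Or.inl (by rw [if_neg hi])

theorem hedgehogMk_hedgehogProj {i : I} {x : Hedgehog I}
    (hx : ∀ j ≠ i, (hedgehogProj j x : ℝ) = 0) : hedgehogMk (hedgehogProj i x) i = x := by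
  induction x using Quotient.ind with | _ p =>
  obtain ⟨⟨t, ht⟩, k⟩ := p
  unfold hedgehogMk
  rw [hedgehogProj_mk]
  by_cases hk : k = i
  · subst hk; rw [if_pos rfl, projIcc_val]
  · have ht0 : t = 0 := by simpa [hedgehogProj_mk] using hx k hk
    rw [if_neg hk]
    exact Quotient.sound (Or.inl ⟨by simp, ht0⟩)

theorem dist_hedgehogMk_le (s t : ℝ) (i j : I) :
    dist (hedgehogMk s i) (hedgehogMk t j) ≤
      (projIcc 0 1 zero_le_one s : ℝ) + projIcc 0 1 zero_le_one t :=
  hedgehogDist_mk_le _ _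

theorem dist_hedgehogMk_one {i j : I} (hij : i ≠ j) :
    dist (hedgehogMk 1 i) (hedgehogMk 1 j) = 2 := by
  unfold hedgehogMk
  rw [hedgehogDist_mk, if_neg hij, projIcc_right]
  norm_num

theorem continuous_hedgehogMk (i : I) : Continuous fun t : ℝ => hedgehogMk t i :=
  LipschitzWith.continuous (K := 1) <| .of_dist_le_mul fun s t => by
    simpa [hedgehogMk, hedgehogDist_mk, Real.dist_eq] using abs_projIcc_sub_projIcc zero_le_one

theorem isDiscreteFamily_setOf_le_hedgehogProj {t : ℝ} (ht : 0 < t) :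
    IsDiscreteFamily fun i : I => {x : Hedgehog I | t ≤ hedgehogProj i x} := by
  intro x
  refine ⟨Metric.ball x t, Metric.ball_mem_nhds x ht, fun i ⟨y, hyi, hy⟩ j ⟨z, hzj, hz⟩ => ?_⟩
  have hpos : ∀ k, ∀ w ∈ Metric.ball x t, t ≤ hedgehogProj k w → 0 < (hedgehogProj k x : ℝ) :=
    fun k w hw hwk => by
      have := (le_abs_self _).trans (abs_hedgehogProj_sub_le k w x)
      linarith [Metric.mem_ball.mp hw]
  by_contra hij
  rcases hedgehogProj_eq_zero_or hij x with h0 | h0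
  · exact (hpos i y hy hyi).ne' h0
  · exact (hpos j z hz hzj).ne' h0

variable {X : Type v} [TopologicalSpace X]

/-- The cap `g` gives continuity at points outside `⋃ i, W i`, where infinitely many `W i` may
accumulate. -/
theorem continuous_hedgehogMk_min {W : I → Set X} (hW : ∀ i, IsOpen (W i)) {idx : X → I}
    (hidx : ∀ i, ∀ x ∈ W i, idx x = i) {r : I → X → ℝ} (hr : ∀ i, Continuous (r i))
    {g : X → ℝ} (hg : Continuous g) (hg0 : ∀ x, (∀ i, x ∉ W i) → g x ≤ 0) :
    Continuous fun x => hedgehogMk (min (r (idx x) x) (g x)) (idx x) := by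
  refine continuous_iff_continuousAt.mpr fun x => ?_
  by_cases hx : ∃ i, x ∈ W i
  · obtain ⟨i, hxi⟩ := hx
    have hloc : (fun y => hedgehogMk (min (r i y) (g y)) i) =ᶠ[𝓝 x]
        fun y => hedgehogMk (min (r (idx y) y) (g y)) (idx y) :=
      Filter.eventually_of_mem ((hW i).mem_nhds hxi) fun y hy => by simp only [hidx i y hy]
    exact ((continuous_hedgehogMk i).comp ((hr i).min hg)).continuousAt.congr hloc
  · replace hx := not_exists.mp hx
    let σ : ℝ → ℝ := fun t => projIcc 0 1 zero_le_one t
    have hσ : Monotone σ := fun s t hst => Subtype.mono_coe _ (monotone_projIcc _ hst)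
    have hσgx : σ (g x) = 0 := by simp [σ, projIcc_of_le_left _ (hg0 x hx)]
    have hσg : Continuous fun y => σ (g y) :=
      (continuous_subtype_val.comp continuous_projIcc).comp hg
    rw [ContinuousAt, tendsto_iff_dist_tendsto_zero]
    refine squeeze_zero (fun _ => dist_nonneg) (fun y => ?_) (hσgx ▸ hσg.tendsto x)
    calc _ ≤ σ (min (r (idx y) y) (g y)) + σ (min (r (idx x) x) (g x)) := dist_hedgehogMk_le _ _ _ _
      _ ≤ σ (g y) + σ (g x) := add_le_add (hσ (min_le_right _ _)) (hσ (min_le_right _ _))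
      _ = σ (g y) := by rw [hσgx, add_zero]

variable {κ : Cardinal.{u}}

theorem IsCollectionwiseNormalWrt.exists_isOpen_pairwise_disjoint_hedgehog [NormalSpace X]
    (h : IsCollectionwiseNormalWrt κ X) (hI : #I = κ) {A : Set X} (hA : IsClosed A)
    {f : A → Hedgehog I} (hf : Continuous f) :
    ∃ W : I → Set X, (∀ i, IsOpen (W i)) ∧ (Pairwise fun i j => Disjoint (W i) (W j)) ∧
      ∀ i (a : A), 0 < (hedgehogProj i (f a) : ℝ) → (a : X) ∈ W i := by
  let C : ℕ → I → Set X := fun n i =>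
    (↑) '' (f ⁻¹' {x : Hedgehog I | 1 / ((n : ℝ) + 1) ≤ hedgehogProj i x})
  have hC : ∀ n i, IsClosed (C n i) := fun n i => hA.isClosedEmbedding_subtypeVal.isClosedMap _
    ((isClosed_le continuous_const (continuous_hedgehogProj i)).preimage hf)
  have hd : ∀ n, IsDiscreteFamily (C n) := fun n =>
    ((isDiscreteFamily_setOf_le_hedgehogProj (by positivity)).preimage hf
      ).image_of_isClosedEmbedding hA.isClosedEmbedding_subtypeVal
  have hsep : ∀ n i, Disjoint (C n i) (closure (⋃ m, ⋃ k ∈ ({i}ᶜ : Set I), C m k)) := by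
    intro n i
    let Z : Set X := (↑) '' (f ⁻¹' {x : Hedgehog I | (hedgehogProj i x : ℝ) = 0})
    have hZ : IsClosed Z := hA.isClosedEmbedding_subtypeVal.isClosedMap _
      ((isClosed_eq (continuous_hedgehogProj i) continuous_const).preimage hf)
    refine Disjoint.mono_right (closure_minimal ?_ hZ) ?_
    · simp only [iUnion_subset_iff]
      rintro m k hk _ ⟨a, ha, rfl⟩
      refine ⟨a, (hedgehogProj_eq_zero_or (Ne.symm hk) (f a)).resolve_right fun h0 => ?_, rfl⟩
      have ha' : 1 / ((m : ℝ) + 1) ≤ hedgehogProj k (f a) := ha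
      linarith [show (0 : ℝ) < 1 / ((m : ℝ) + 1) by positivity]
    · refine disjoint_left.mpr ?_
      rintro _ ⟨a, ha, rfl⟩ ⟨b, hb, hba⟩
      have ha' : 1 / ((n : ℝ) + 1) ≤ hedgehogProj i (f a) := ha
      have hb' : (hedgehogProj i (f b) : ℝ) = 0 := hb
      rw [Subtype.val_injective hba] at hb'
      linarith [show (0 : ℝ) < 1 / ((n : ℝ) + 1) by positivity]
  obtain ⟨W, hWo, hWd, hCW⟩ := h.exists_isOpen_pairwise_disjoint_of_seq hI hC hd hsep
  refine ⟨W, hWo, hWd, fun i a ha => ?_⟩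
  obtain ⟨n, hn⟩ := exists_nat_one_div_lt ha
  exact hCW n i ⟨a, hn.le, rfl⟩

theorem IsCollectionwiseNormalWrt.exists_hedgehog_extension [NormalSpace X] [Nonempty I]
    (h : IsCollectionwiseNormalWrt κ X) (hI : #I = κ) {A : Set X} (hA : IsClosed A)
    {f : A → Hedgehog I} (hf : Continuous f) :
    ∃ F : X → Hedgehog I, Continuous F ∧ ∀ a : A, F a = f a := by
  obtain ⟨W, hWo, hWd, hW⟩ := h.exists_isOpen_pairwise_disjoint_hedgehog hI hA hf
  choose r hr hrA using fun i =>
    hA.exists_continuous_extension ((continuous_hedgehogProj i).comp hf)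
  obtain ⟨g, hg, hgA, hg0⟩ := hA.exists_continuous_extension_eq_zero_off (isOpen_iUnion hWo)
    (continuous_hedgehogPiKappa.comp hf) fun a ha => by
      obtain ⟨i, hi⟩ := exists_hedgehogProj_eq_hedgehogPiKappa (f a)
      refine (hedgehogPiKappa (f a)).2.1.eq_or_lt.resolve_right (fun hpos => ha ?_) |>.symm
      exact mem_iUnion.mpr ⟨i, hW i a (by rwa [hi])⟩
  classical
  let idx : X → I := fun x => if hx : ∃ i, x ∈ W i then hx.choose else Classical.arbitrary I
  have hidx : ∀ i, ∀ x ∈ W i, idx x = i := fun i x hx => by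
    have hex : ∃ i, x ∈ W i := ⟨i, hx⟩
    simp only [idx, dif_pos hex]
    exact hWd.eq (not_disjoint_iff.mpr ⟨x, hex.choose_spec, hx⟩)
  refine ⟨_, continuous_hedgehogMk_min hWo hidx hr hg fun x hx => (hg0 x (by simpa using hx)).le,
    fun a => ?_⟩
  have hzero : ∀ j ≠ idx a, (hedgehogProj j (f a) : ℝ) = 0 := fun j hj =>
    ((hedgehogProj j (f a)).2.1.eq_or_lt.resolve_right fun hpos =>
      hj (hidx j a (hW j a hpos)).symm).symm
  calc hedgehogMk (min (r (idx a) a) (g a)) (idx a)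
      = hedgehogMk (hedgehogProj (idx a) (f a)) (idx a) := by
        rw [hrA, hgA, Function.comp_apply, Function.comp_apply,
          min_eq_left (hedgehogProj_le_hedgehogPiKappa _ _)]
    _ = f a := hedgehogMk_hedgehogProj hzero

theorem isCollectionwiseNormalWrt_of_hedgehog_extension (hI : #I = κ)
    (hext : ∀ A : Set X, IsClosed A → ∀ f : A → Hedgehog I, Continuous f →
      ∃ F : X → Hedgehog I, Continuous F ∧ ∀ a : A, F a = f a) :
    IsCollectionwiseNormalWrt κ X := by
  intro ι C hι hC hd
  obtain ⟨e⟩ : Nonempty (ι ≃ I) := Cardinal.eq.mp (hι.trans hI.symm)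
  let tip : ι → Hedgehog I := fun i => hedgehogMk 1 (e i)
  choose idx hidx using fun a : ⋃ i, C i => mem_iUnion.mp a.2
  obtain ⟨G, hG, hGC⟩ := hext _ (hd.locallyFinite.isClosed_iUnion hC) (tip ∘ idx)
    (hd.continuous_of_forall_mem_eq tip fun a i hai => by
      rw [Function.comp_apply, hd.eq_of_mem (hidx a) hai])
  refine ⟨fun i => G ⁻¹' Metric.ball (tip i) 1, fun i => Metric.isOpen_ball.preimage hG,
    fun i j hij => ?_, fun i x hx => ?_⟩
  · refine (Metric.ball_disjoint_ball ?_).preimage G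
    rw [dist_hedgehogMk_one (e.injective.ne hij)]
    norm_num
  · have hGx : G x = tip i := by
      rw [hGC ⟨x, mem_iUnion.mpr ⟨i, hx⟩⟩, Function.comp_apply, hd.eq_of_mem (hidx _) hx]
    simp [hGx]

end Hedgehog

/-- A space `X` is `κ`-collectionwise normal (for `κ > 1`) if and only if every continuous
map from a closed subspace of `X` to the metric hedgehog `MJ(κ)` extends continuously
to `X`. -/
theorem collectionwiseNormal_iff_hedgehog_extension (κ : Cardinal.{u}) (hκ : 1 < κ)
    (I : Type u) (hI : #I = κ) (X : Type v) [TopologicalSpace X] :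
    IsCollectionwiseNormalWrt κ X ↔
      ∀ (A : Set X), IsClosed A →
        ∀ f : A → Hedgehog I, @Continuous _ _ _ (metricHedgehogTop I) f →
          ∃ F : X → Hedgehog I, @Continuous _ _ _ (metricHedgehogTop I) F ∧
            ∀ a : A, F a = f a := by
  let _ := metricHedgehog I
  refine ⟨fun h A hA f hf => ?_, isCollectionwiseNormalWrt_of_hedgehog_extension hI⟩
  have : NormalSpace X := h.normalSpace hκ
  have : Nontrivial I := Cardinal.one_lt_iff_nontrivial.mp (hI ▸ hκ)
  exact h.exists_hedgehog_extension hI hA hf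
end

section
/- Let X be a metrizable topological space of weight κ ≤ 𝔠 (the cardinality of the continuum). Then there exists a separable metrizable space Y and a continuous bijection F : X → Y. -/
open Set Topology Cardinal

universe u v

/-!
A metrizable space is first countable, so `#X ≤ (weight X) ^ ℵ₀ ≤ 𝔠` and the points of `X`
can be labelled injectively by reals. By Stone's construction, the cover of `X` by
`2⁻¹ ^ N`-balls is refined by countably many uniformly separated families of open sets. Sending
each point of a member `A` with label `r` to the line of slope `r` in the plane, at abscissa
`infDist x Aᶜ`, is continuous (a map through the metric hedgehog with `𝔠` spines), and these
countably many maps separate points. So `X` injects continuously into `ℕ × ℕ → ℝ × ℝ`, and the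
topology induced from there is a coarser separable metrizable topology on `X`.
-/

open Metric Function TopologicalSpace

section Weight

variable {X : Type u} [TopologicalSpace X]

variable (X) in
theorem exists_isTopologicalBasis_mk_eq_weight :
    ∃ B : Set (Set X), IsTopologicalBasis B ∧ #B = weight X :=
  csInf_mem (s := {c | ∃ B : Set (Set X), IsTopologicalBasis B ∧ #B = c})
    ⟨_, _, isTopologicalBasis_opens, rfl⟩

/-- A point is determined by a countable neighbourhood basis drawn from `B`. -/
theorem mk_le_mk_pow_aleph0_of_isTopologicalBasis [FirstCountableTopology X] [T0Space X]
    {B : Set (Set X)} (hB : IsTopologicalBasis B) : #X ≤ #B ^ ℵ₀ := by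
  choose s hsB hs using fun x => (hB.nhds_hasBasis (a := x)).exists_antitone_subbasis
  let code : X → ULift.{u} ℕ → B := fun x n => ⟨s x n.down, (hsB x n.down).1⟩
  have code_injective : Injective code := by
    intro x y hxy
    have hs_eq : s x = s y := funext fun n => congrArg Subtype.val (congrFun hxy ⟨n⟩)
    exact nhds_eq_nhds_iff.1 ((hs x).eq_of_same_basis (hs_eq ▸ (hs y).toHasBasis))
  calc #X ≤ #(ULift.{u} ℕ → B) := mk_le_of_injective code_injective
    _ = #B ^ ℵ₀ := by simp

theorem mk_le_continuum_of_weight_le_continuum [FirstCountableTopology X] [T0Space X]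
    (hw : weight X ≤ 𝔠) : #X ≤ 𝔠 := by
  obtain ⟨B, hB, hBw⟩ := exists_isTopologicalBasis_mk_eq_weight X
  calc #X ≤ #B ^ ℵ₀ := mk_le_mk_pow_aleph0_of_isTopologicalBasis hB
    _ ≤ 𝔠 ^ ℵ₀ := power_le_power_right (hBw ▸ hw)
    _ = 𝔠 := continuum_power_aleph0

end Weight

section Separated

variable {X ι : Type*} [PseudoMetricSpace X]

def IsUniformlySeparated (ε : ℝ) (A : ι → Set X) : Prop :=
  Pairwise fun i j => ∀ x ∈ A i, ∀ y ∈ A j, ε ≤ dist x y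

variable {ε : ℝ} {A : ι → Set X}

theorem IsUniformlySeparated.eq_of_mem (hA : IsUniformlySeparated ε A) (hε : 0 < ε) {x : X}
    {i j : ι} (hi : x ∈ A i) (hj : x ∈ A j) : i = j := by
  by_contra hij
  have := hA hij x hi x hj
  rw [dist_self] at this
  linarith

theorem IsUniformlySeparated.locallyFinite (hA : IsUniformlySeparated ε A) (hε : 0 < ε) :
    LocallyFinite A := by
  refine fun x => ⟨ball x (ε / 2), ball_mem_nhds x (half_pos hε), Set.Subsingleton.finite ?_⟩
  rintro i ⟨y, hyi, hy⟩ j ⟨z, hzj, hz⟩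
  by_contra hij
  have := hA hij y hyi z hzj
  have := dist_triangle_right y z x
  rw [mem_ball] at hy hz
  linarith

/-- Sends `x ∈ A i` to the line of slope `c i` through the origin, at abscissa
`infDist x (A i)ᶜ`. -/
noncomputable def fanMap (A : ι → Set X) (c : ι → ℝ) (x : X) : ℝ × ℝ :=
  (∑ᶠ i, infDist x (A i)ᶜ, ∑ᶠ i, c i * infDist x (A i)ᶜ)

theorem fanMap_of_mem (hA : IsUniformlySeparated ε A) (hε : 0 < ε) (c : ι → ℝ) {x : X} {i : ι}
    (hx : x ∈ A i) : fanMap A c x = (infDist x (A i)ᶜ, c i * infDist x (A i)ᶜ) := by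
  have hj : ∀ j ≠ i, infDist x (A j)ᶜ = 0 := fun j hji =>
    infDist_zero_of_mem fun hxj => hji (hA.eq_of_mem hε hxj hx)
  refine Prod.ext (finsum_eq_single _ i hj) (finsum_eq_single _ i fun j hji => ?_)
  rw [hj j hji, mul_zero]

theorem fanMap_of_forall_notMem (c : ι → ℝ) {x : X} (hx : ∀ i, x ∉ A i) : fanMap A c x = 0 := by
  simp [fanMap, infDist_zero_of_mem (mem_compl (hx _))]

theorem continuous_fanMap (hA : IsUniformlySeparated ε A) (hε : 0 < ε) (c : ι → ℝ) :
    Continuous (fanMap A c) := by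
  have hsupp (d : ι → ℝ) : LocallyFinite fun i => support fun x => d i * infDist x (A i)ᶜ :=
    (hA.locallyFinite hε).subset fun i x hx => by
      by_contra hxi
      simp [infDist_zero_of_mem (mem_compl hxi)] at hx
  refine .prodMk ?_ ?_
  · simpa using continuous_finsum (fun i => continuous_infDist_pt _) (by simpa using hsupp 1)
  · exact continuous_finsum (fun i => continuous_const.mul (continuous_infDist_pt _)) (hsupp c)

theorem fanMap_ne_of_mem_of_notMem (hA : IsUniformlySeparated ε A) (hε : 0 < ε) {c : ι → ℝ}
    (hc : Injective c) {i : ι} (hAi : IsOpen (A i)) {x y : X} (hx : x ∈ A i) (hy : y ∉ A i) :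
    fanMap A c x ≠ fanMap A c y := by
  have hpos : 0 < infDist x (A i)ᶜ :=
    (hAi.isClosed_compl.notMem_iff_infDist_pos ⟨y, hy⟩).1 (not_not.2 hx)
  rw [fanMap_of_mem hA hε c hx]
  intro h
  by_cases hy' : ∃ j, y ∈ A j
  · obtain ⟨j, hyj⟩ := hy'
    rw [fanMap_of_mem hA hε c hyj, Prod.mk.injEq, ← h.1] at h
    have hij : i = j := hc (mul_right_cancel₀ hpos.ne' h.2)
    exact hy (hij ▸ hyj)
  · rw [fanMap_of_forall_notMem c (not_exists.1 hy'), Prod.mk_eq_zero] at h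
    exact hpos.ne' h.1

end Separated

section Refinement

variable {X ι : Type*} [PseudoMetricSpace X]

/-- Stone's construction, without the recursion that makes the refinement locally finite:
`D n i` is the union of the balls `ball c (2⁻¹ ^ n)` such that `i` is the least index with
`c ∈ s i` (for a well-order on `ι`) and `ball c (3 * 2⁻¹ ^ n) ⊆ s i`. -/
theorem exists_uniformlySeparated_refinement {s : ι → Set X} (hs : ∀ i, IsOpen (s i))
    (hcov : ∀ x, ∃ i, x ∈ s i) :
    ∃ D : ℕ → ι → Set X, (∀ n i, IsOpen (D n i)) ∧ (∀ n i, D n i ⊆ s i) ∧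
      (∀ x, ∃ n i, x ∈ D n i) ∧ ∀ n, IsUniformlySeparated (2⁻¹ ^ n) (D n) := by
  obtain ⟨_, _⟩ := exists_wellFoundedLT ι
  let ind (x : X) : ι := wellFounded_lt.min {i | x ∈ s i} (hcov x)
  have mem_ind (x : X) : x ∈ s (ind x) := wellFounded_lt.min_mem _ (hcov x)
  have notMem_of_lt_ind {x : X} {i : ι} (hi : i < ind x) : x ∉ s i := fun hx =>
    wellFounded_lt.not_lt_min {i | x ∈ s i} hx hi
  have hpos (n : ℕ) : (0 : ℝ) < 2⁻¹ ^ n := by positivity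
  let D (n : ℕ) (i : ι) : Set X :=
    ⋃ c ∈ {c | ind c = i ∧ ball c (3 * 2⁻¹ ^ n) ⊆ s i}, ball c (2⁻¹ ^ n)
  have separated_of_lt (n : ℕ) {i j : ι} (hij : i < j) {x y : X} (hx : x ∈ D n i)
      (hy : y ∈ D n j) : 2⁻¹ ^ n ≤ dist x y := by
    obtain ⟨c, ⟨rfl, hc⟩, hxc⟩ := mem_iUnion₂.1 hx
    obtain ⟨c', ⟨rfl, -⟩, hyc'⟩ := mem_iUnion₂.1 hy
    have hcc' : 3 * 2⁻¹ ^ n ≤ dist c' c := not_lt.1 fun h => notMem_of_lt_ind hij (hc h)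
    rw [mem_ball] at hxc hyc'
    linarith [dist_triangle4 c' y x c, dist_comm x y, dist_comm c' y]
  refine ⟨D, fun n i => isOpen_biUnion fun _ _ => isOpen_ball, ?_, ?_, ?_⟩
  · intro n i
    refine iUnion₂_subset fun c hc => (ball_subset_ball ?_).trans hc.2
    linarith [hpos n]
  · intro x
    obtain ⟨δ, hδ, hball⟩ := isOpen_iff.1 (hs (ind x)) x (mem_ind x)
    obtain ⟨n, hn⟩ := exists_pow_lt_of_lt_one (by linarith : (0 : ℝ) < δ / 3)
      (by norm_num : (2⁻¹ : ℝ) < 1)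
    refine ⟨n, ind x, mem_iUnion₂.2 ⟨x, ⟨rfl, (ball_subset_ball ?_).trans hball⟩,
      mem_ball_self (hpos n)⟩⟩
    linarith
  · intro n i j hij x hx y hy
    rcases hij.lt_or_gt with h | h
    · exact separated_of_lt n h hx hy
    · exact dist_comm x y ▸ separated_of_lt n h hy hx

end Refinement

theorem exists_continuous_injective_of_mk_le_continuum {X : Type u} [MetricSpace X]
    (hX : #X ≤ 𝔠) : ∃ F : X → (ℕ × ℕ → ℝ × ℝ), Continuous F ∧ Injective F := by
  obtain ⟨r⟩ : Nonempty (X ↪ ℝ) := by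
    rw [← lift_mk_le', mk_real, lift_continuum]
    exact lift_le_continuum.2 hX
  choose D hopen hsub hcov hsep using fun N : ℕ =>
    exists_uniformlySeparated_refinement (fun z : X => isOpen_ball (x := z) (ε := 2⁻¹ ^ N))
      fun x => ⟨x, mem_ball_self (by positivity)⟩
  refine ⟨fun x p => fanMap (D p.1 p.2) r x,
    continuous_pi fun p => continuous_fanMap (hsep p.1 p.2) (by positivity) r, fun x y hxy => ?_⟩
  by_contra hne
  obtain ⟨N, hN⟩ := exists_pow_lt_of_lt_one (half_pos (dist_pos.2 hne))
    (by norm_num : (2⁻¹ : ℝ) < 1)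
  obtain ⟨n, z, hxz⟩ := hcov N x
  have hyz : y ∉ D N n z := fun hyz => by
    have hxz' := mem_ball.1 (hsub N n z hxz)
    have hyz' := mem_ball.1 (hsub N n z hyz)
    linarith [dist_triangle_right x y z]
  exact fanMap_ne_of_mem_of_notMem (hsep N n) (by positivity) r.injective (hopen N n z) hxz hyz
    (congrFun hxy (N, n))

/-- Every metrizable space of weight at most the continuum admits a continuous bijection
onto a separable metrizable space. -/
theorem exists_continuous_bijection_onto_separable (X : Type u) [TopologicalSpace X]
    [TopologicalSpace.MetrizableSpace X] (hw : weight X ≤ Cardinal.continuum) :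
    ∃ (Y : Type u) (tY : TopologicalSpace Y),
      @TopologicalSpace.MetrizableSpace Y tY ∧ @TopologicalSpace.SeparableSpace Y tY ∧
        ∃ F : X → Y, Function.Bijective F ∧ @Continuous X Y _ tY F := by
  let := metrizableSpaceMetric X
  obtain ⟨F, hF, hF_inj⟩ :=
    exists_continuous_injective_of_mk_le_continuum (mk_le_continuum_of_weight_le_continuum hw)
  let tY : TopologicalSpace X := .induced F inferInstance
  have hF_emb : @IsEmbedding X _ tY _ F := ⟨⟨rfl⟩, hF_inj⟩
  have hY : @SecondCountableTopology X tY := secondCountableTopology_induced X _ F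
  exact ⟨X, tY, hF_emb.metrizableSpace, @SecondCountableTopology.to_separableSpace X tY hY, id,
    bijective_id, continuous_id_iff_le.2 (continuous_iff_le_induced.1 hF)⟩
end

section
/- Every metrizable topological space has a σ-discrete basis, i.e., a basis of its topology that can be written as a countable union of discrete families of open sets. -/
/-!
Well-order the index set of an open cover `s` of a pseudo-emetric space. For a radius `r`, the
`r`-layer of the cover assigns to `i` the union of the balls `B(x, r)` over the points `x` whose
least cover member is `s i` and which satisfy `B(x, 3r) ⊆ s i`. Two such centres with different
indices are `3r` apart, because the centre with the larger index lies outside the member of the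
smaller one; so the members of a layer are `r`-separated, and each layer is a discrete family.
Every point lies in the layer of radius `1/n` for large `n`, so the layers form a σ-discrete open
refinement. Refining the covers by balls of radius `1/k` in this way gives a σ-discrete family of
open sets containing arbitrarily small neighbourhoods of every point, that is, a basis.
-/

open Set Topology Cardinal

universe u v

open Metric
open scoped ENNReal

theorem IsDiscreteFamily.isDiscreteSetFamily_range {X ι : Type*} [TopologicalSpace X]
    {A : ι → Set X} (hA : IsDiscreteFamily A) : IsDiscreteSetFamily (range A) := by
  intro x
  obtain ⟨N, hN, hsub⟩ := hA x
  refine ⟨N, hN, ?_⟩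
  rintro _ ⟨⟨i, rfl⟩, hi⟩ _ ⟨⟨j, rfl⟩, hj⟩
  rw [hsub hi hj]

theorem isTopologicalBasis_of_forall_exists_subset_eball {α : Type*} [PseudoEMetricSpace α]
    {𝒰 : Set (Set α)} (hopen : ∀ U ∈ 𝒰, IsOpen U)
    (hfine : ∀ x, ∀ ε > 0, ∃ U ∈ 𝒰, x ∈ U ∧ ∃ y, U ⊆ eball y ε) :
    TopologicalSpace.IsTopologicalBasis 𝒰 := by
  refine TopologicalSpace.isTopologicalBasis_of_isOpen_of_nhds hopen fun x V hxV hV => ?_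
  obtain ⟨ε, hε, hεV⟩ := EMetric.isOpen_iff.1 hV x hxV
  obtain ⟨U, hU, hxU, y, hUy⟩ := hfine x (ε / 2) (ENNReal.half_pos hε.ne')
  refine ⟨U, hU, hxU, fun z hz => hεV ?_⟩
  calc edist z x ≤ edist z y + edist x y := edist_triangle_right _ _ _
    _ < ε / 2 + ε / 2 := ENNReal.add_lt_add (hUy hz) (hUy hxU)
    _ = ε := ENNReal.add_halves ε

section RefinementLayer

variable {α ι : Type*} [PseudoEMetricSpace α]

section Preorder

variable [Preorder ι]

def refinementLayer (s : ι → Set α) (r : ℝ≥0∞) (i : ι) : Set α :=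
  ⋃ (x : α) (_ : IsLeast {j | x ∈ s j} i) (_ : eball x (3 * r) ⊆ s i), eball x r

variable {s : ι → Set α} {r : ℝ≥0∞}

theorem mem_refinementLayer {i : ι} {y : α} :
    y ∈ refinementLayer s r i ↔
      ∃ x, IsLeast {j | x ∈ s j} i ∧ eball x (3 * r) ⊆ s i ∧ edist y x < r := by
  simp only [refinementLayer, mem_iUnion, mem_eball, exists_prop]

theorem isOpen_refinementLayer (i : ι) : IsOpen (refinementLayer s r i) :=
  isOpen_iUnion fun _ => isOpen_iUnion fun _ => isOpen_iUnion fun _ => isOpen_eball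

theorem refinementLayer_subset (i : ι) : refinementLayer s r i ⊆ s i := by
  intro y hy
  obtain ⟨x, -, hxs, hyx⟩ := mem_refinementLayer.1 hy
  exact hxs (hyx.trans_le (le_mul_of_one_le_left' (by norm_num)))

theorem le_edist_of_mem_refinementLayer {i j : ι} (hij : i < j) {y z : α}
    (hy : y ∈ refinementLayer s r i) (hz : z ∈ refinementLayer s r j) : r ≤ edist y z := by
  obtain ⟨y', -, hy's, hyy'⟩ := mem_refinementLayer.1 hy
  obtain ⟨z', hz'j, -, hzz'⟩ := mem_refinementLayer.1 hz
  by_contra! hyz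
  have hz'i : z' ∈ s i := hy's <| calc
    edist z' y' ≤ edist z' z + edist z y + edist y y' := edist_triangle4 _ _ _ _
    _ < r + r + r := by
      gcongr
      · rwa [edist_comm]
      · rwa [edist_comm]
    _ = 3 * r := by ring
  exact (hz'j.2 hz'i).not_gt hij

end Preorder

variable [LinearOrder ι] {s : ι → Set α} {r : ℝ≥0∞}

theorem isDiscreteFamily_refinementLayer (hr : r ≠ 0) :
    IsDiscreteFamily (refinementLayer s r) := by
  intro x
  refine ⟨eball x (r / 2), eball_mem_nhds x (ENNReal.half_pos hr), ?_⟩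
  rintro i ⟨y, hyi, hyx⟩ j ⟨z, hzj, hzx⟩
  have hyz : edist y z < r := calc
    edist y z ≤ edist y x + edist z x := edist_triangle_right _ _ _
    _ < r / 2 + r / 2 := ENNReal.add_lt_add hyx hzx
    _ = r := ENNReal.add_halves r
  by_contra hne
  rcases lt_or_gt_of_ne hne with hij | hji
  · exact (le_edist_of_mem_refinementLayer hij hyi hzj).not_gt hyz
  · exact (le_edist_of_mem_refinementLayer hji hzj hyi).not_gt (edist_comm y z ▸ hyz)

theorem exists_mem_refinementLayer [WellFoundedLT ι] (hs : ∀ i, IsOpen (s i)) {x : α}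
    (hx : ∃ i, x ∈ s i) : ∃ (n : ℕ) (i : ι), x ∈ refinementLayer s (n : ℝ≥0∞)⁻¹ i := by
  obtain ⟨i, hi⟩ : ∃ i, IsLeast {j | x ∈ s j} i :=
    ⟨_, wellFounded_lt.min_mem _ hx, fun j hj => wellFounded_lt.min_le hj⟩
  obtain ⟨ε, hε, hεs⟩ := EMetric.isOpen_iff.1 (hs i) x hi.1
  obtain ⟨n, hn⟩ : ∃ n : ℕ, (n : ℝ≥0∞)⁻¹ < ε / 3 :=
    ENNReal.exists_inv_nat_lt (ENNReal.div_pos hε.ne' (by norm_num)).ne'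
  have h3n : 3 * (n : ℝ≥0∞)⁻¹ ≤ ε := by
    simpa only [mul_comm] using (ENNReal.mul_lt_of_lt_div hn).le
  exact ⟨n, i, mem_refinementLayer.2 ⟨x, hi, (eball_subset_eball h3n).trans hεs, by simp⟩⟩

end RefinementLayer

theorem exists_sigmaDiscrete_open_refinement {α ι : Type*} [PseudoEMetricSpace α]
    (s : ι → Set α) (hs : ∀ i, IsOpen (s i)) (hcov : ∀ x, ∃ i, x ∈ s i) :
    ∃ D : ℕ → ι → Set α, (∀ n i, IsOpen (D n i)) ∧ (∀ x, ∃ n i, x ∈ D n i) ∧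
      (∀ n i, D n i ⊆ s i) ∧ ∀ n, IsDiscreteFamily (D n) := by
  obtain ⟨_, _⟩ := exists_wellFoundedLT ι
  exact ⟨fun n => refinementLayer s (n : ℝ≥0∞)⁻¹, fun _ => isOpen_refinementLayer,
    fun x => exists_mem_refinementLayer hs (hcov x), fun _ => refinementLayer_subset,
    fun n => isDiscreteFamily_refinementLayer (by simp)⟩

/-- Every metrizable space has a σ-discrete basis. -/
theorem exists_sigma_discrete_basis (X : Type*) [TopologicalSpace X]
    [TopologicalSpace.MetrizableSpace X] :
    ∃ B : ℕ → Set (Set X),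
      TopologicalSpace.IsTopologicalBasis (⋃ n, B n) ∧
      (∀ n, ∀ W ∈ B n, IsOpen W) ∧
      (∀ n, IsDiscreteSetFamily (B n)) := by
  let := TopologicalSpace.pseudoMetrizableSpacePseudoMetric X
  choose D hDopen hDcov hDsub hDdisc using fun k : ℕ =>
    exists_sigmaDiscrete_open_refinement (fun y : X => eball y (k : ℝ≥0∞)⁻¹)
      (fun _ => isOpen_eball) (fun x => ⟨x, mem_eball_self (by simp)⟩)
  let B : ℕ → Set (Set X) := fun m => range (D m.unpair.1 m.unpair.2)
  have hBopen : ∀ m, ∀ W ∈ B m, IsOpen W := by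
    rintro m _ ⟨y, rfl⟩
    exact hDopen _ _ _
  refine ⟨B, ?_, hBopen, fun m => (hDdisc _ _).isDiscreteSetFamily_range⟩
  refine isTopologicalBasis_of_forall_exists_subset_eball
    (fun W hW => (mem_iUnion.1 hW).elim fun m => hBopen m W) fun x ε hε => ?_
  obtain ⟨k, hk⟩ := ENNReal.exists_inv_nat_lt hε.ne'
  obtain ⟨n, y, hxD⟩ := hDcov k x
  refine ⟨D k n y, mem_iUnion.2 ⟨Nat.pair k n, ?_⟩, hxD, y,
    (hDsub k n y).trans (eball_subset_eball hk.le)⟩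
  simp only [B, Nat.unpair_pair]
  exact mem_range_self y
end

section
/- The quotient hedgehog J(κ) is first countable if and only if κ < ℵ₀. -/
open Set Topology Cardinal

universe u v

/-!
For finitely many spines the quotient map `[0,1] × I → J(κ)` is a closed continuous surjection
with finite fibres, and such maps preserve first countability: the neighbourhood filter of a point
is the image of the neighbourhood filter of its fibre, a finite supremum of countably generated
filters.

For infinitely many spines `e 0, e 1, …`, a countable family `s n` of neighbourhoods of `0` cannot
be a basis: pick on spine `e n` a point of `s n` at height `u n > 0`; the open set of points lying
below height `u n` on spine `e n` (and below height `1` elsewhere) is a neighbourhood of `0`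
containing none of the `s n`.
-/
open Filter

theorem Set.Finite.isCountablyGenerated_nhdsSet {X : Type*} [TopologicalSpace X]
    [FirstCountableTopology X] {s : Set X} (hs : s.Finite) : (𝓝ˢ s).IsCountablyGenerated := by
  induction s, hs using Set.Finite.induction_on with
  | empty => rw [nhdsSet_empty]; exact isCountablyGenerated_bot
  | insert => rw [nhdsSet_insert]; infer_instance

theorem IsClosedMap.firstCountableTopology {X Y : Type*} [TopologicalSpace X]
    [TopologicalSpace Y] [FirstCountableTopology X] {f : X → Y} (hf : IsClosedMap f)
    (hcont : Continuous f) (hsurj : Function.Surjective f) (hfin : ∀ y, (f ⁻¹' {y}).Finite) :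
    FirstCountableTopology Y where
  nhds_generated_countable y := by
    have := (hfin y).isCountablyGenerated_nhdsSet
    rw [← map_comap_of_surjective hsurj (𝓝 y), hf.comap_nhds_eq hcont]
    infer_instance

namespace Hedgehog

local notation "π" => Quotient.mk (hedgehogSetoid _)

variable {I : Type u}

def underGraph (c : I → ℝ) : Set (Set.Icc (0:ℝ) 1 × I) := {p | (p.1 : ℝ) < c p.2}

theorem preimage_image_mk (C : Set (Set.Icc (0:ℝ) 1 × I)) :
    π ⁻¹' (π '' C) = C ∪ {p | (p.1 : ℝ) = 0 ∧ ∃ p' ∈ C, (p'.1 : ℝ) = 0} := by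
  ext p
  constructor
  · rintro ⟨p', hp', hp'p⟩
    rcases Quotient.exact hp'p with ⟨hp'0, hp0⟩ | rfl
    · exact Or.inr ⟨hp0, p', hp', hp'0⟩
    · exact Or.inl hp'
  · rintro (hp | ⟨hp0, p', hp', hp'0⟩)
    · exact ⟨p, hp, rfl⟩
    · exact ⟨p', hp', Quotient.sound (Or.inl ⟨hp'0, hp0⟩)⟩

theorem preimage_image_underGraph {c : I → ℝ} (hc : ∀ i, 0 < c i) :
    π ⁻¹' (π '' underGraph c) = underGraph c := by
  rw [preimage_image_mk, union_eq_left]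
  rintro p ⟨hp0, -⟩
  show (p.1 : ℝ) < c p.2
  rw [hp0]
  exact hc p.2

theorem mk_mem_image_underGraph_iff {c : I → ℝ} (hc : ∀ i, 0 < c i) {t : Set.Icc (0:ℝ) 1}
    {i : I} : π (t, i) ∈ π '' underGraph c ↔ (t : ℝ) < c i := by
  rw [← mem_preimage, preimage_image_underGraph hc]
  rfl

theorem finite_preimage_mk_singleton [Finite I] (x : Hedgehog I) : (π ⁻¹' {x}).Finite := by
  induction x using Quotient.ind with
  | _ p =>
    refine ((Set.finite_range fun i : I => ((0 : Set.Icc (0:ℝ) 1), i)).insert p).subset ?_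
    intro p' hp'
    rcases Quotient.exact hp' with ⟨hp'0, -⟩ | rfl
    · exact Or.inr ⟨p'.2, Prod.ext (Subtype.ext hp'0.symm) rfl⟩
    · exact Or.inl rfl

variable [TopologicalSpace I]

theorem isClosedMap_mk : IsClosedMap (π : Set.Icc (0:ℝ) 1 × I → Hedgehog I) := by
  intro C hC
  refine isClosed_coinduced.2 ?_
  show IsClosed (π ⁻¹' (π '' C))
  rw [preimage_image_mk]
  exact hC.union ((isClosed_eq (by fun_prop) continuous_const).inter isClosed_const)

theorem firstCountableTopology_of_finite [Finite I] [FirstCountableTopology I] :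
    FirstCountableTopology (Hedgehog I) :=
  isClosedMap_mk.firstCountableTopology continuous_quotient_mk' Quotient.mk_surjective
    finite_preimage_mk_singleton

theorem exists_pos_mk_mem_of_mem_nhds {i : I} {N : Set (Hedgehog I)}
    (hN : N ∈ 𝓝 (π (0, i))) : ∃ t : Set.Icc (0:ℝ) 1, 0 < t ∧ π (t, i) ∈ N := by
  have hspine : Tendsto (fun t => π (t, i)) (𝓝[>] 0) (𝓝 (π (0, i))) :=
    ((continuous_quotient_mk'.comp (Continuous.prodMk_left i)).tendsto 0).mono_left
      nhdsWithin_le_nhds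
  have : (𝓝[>] (0 : Set.Icc (0:ℝ) 1)).NeBot := nhdsGT_neBot_of_exists_gt ⟨1, zero_lt_one⟩
  exact ((hspine.eventually hN).and self_mem_nhdsWithin).exists.imp fun t ht => ⟨ht.2, ht.1⟩

variable [DiscreteTopology I]

theorem image_underGraph_mem_nhds {c : I → ℝ} (hc : ∀ i, 0 < c i) (i : I) :
    π '' underGraph c ∈ 𝓝 (π (0, i)) := by
  refine IsOpen.mem_nhds ?_ ((mk_mem_image_underGraph_iff hc).2 (hc i))
  refine isOpen_coinduced.2 ?_
  show IsOpen (π ⁻¹' (π '' underGraph c))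
  rw [preimage_image_underGraph hc]
  exact isOpen_lt (by fun_prop) (continuous_of_discreteTopology.comp continuous_snd)

theorem not_firstCountableTopology [Infinite I] : ¬ FirstCountableTopology (Hedgehog I) := by
  intro _
  let e : ℕ ↪ I := Infinite.natEmbedding I
  obtain ⟨s, hs⟩ := (𝓝 (π ((0 : Set.Icc (0:ℝ) 1), e 0))).exists_antitone_basis
  have hzero (n : ℕ) : π ((0 : Set.Icc (0:ℝ) 1), e n) = π (0, e 0) :=
    Quotient.sound (Or.inl ⟨rfl, rfl⟩)
  choose u hu_pos hu_mem using fun n => exists_pos_mk_mem_of_mem_nhds ((hzero n).symm ▸ hs.mem n)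
  classical
  let c : I → ℝ := Function.extend e (fun n => (u n : ℝ)) 1
  have hce (n : ℕ) : c (e n) = u n := e.injective.extend_apply _ _ n
  have hc (i : I) : 0 < c i := by
    by_cases hi : ∃ n, e n = i
    · obtain ⟨n, rfl⟩ := hi
      rw [hce]
      exact hu_pos n
    · exact (Function.extend_apply' _ _ _ hi).trans_gt one_pos
  obtain ⟨n, -, hn⟩ := hs.1.mem_iff.1 (image_underGraph_mem_nhds hc (e 0))
  exact ((mk_mem_image_underGraph_iff hc).1 (hn (hu_mem n))).trans_eq (hce n) |>.false

theorem firstCountableTopology_iff_finite : FirstCountableTopology (Hedgehog I) ↔ Finite I :=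
  ⟨fun h => not_infinite_iff_finite.1 fun _ => not_firstCountableTopology h,
    fun _ => firstCountableTopology_of_finite⟩

end Hedgehog

/-- The quotient hedgehog `J(κ)` is first countable iff `κ < ℵ₀`. -/
theorem quotHedgehog_firstCountable_iff (I : Type u) :
    @FirstCountableTopology (Hedgehog I) (quotHedgehogTop I) ↔
      #I < Cardinal.aleph0 := by
  let _ : TopologicalSpace I := ⊥
  have : DiscreteTopology I := ⟨rfl⟩
  rw [Cardinal.mk_lt_aleph0_iff]
  -- `quotHedgehogTop I` is by definition the quotient topology for the discrete topology on `I`.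
  exact Hedgehog.firstCountableTopology_iff_finite
end

section
/- The quotient hedgehog J(κ) is a Fréchet–Urysohn space: for every subset A ⊆ J(κ) and every point x in the closure of A, there is a sequence of points of A converging to x. -/
open Set Topology Cardinal

universe u v

/-!
Collapsing the closed set `{0} × I` of `[0,1] × I` to a point is a closed map, since the
saturation of a closed set `F` is `F`, or `F ∪ ({0} × I)` when `F` meets `{0} × I`. A continuous
closed surjection carries Fréchet–Urysohn spaces to Fréchet–Urysohn spaces: a point of
`closure A` lifts to a point of `closure (f ⁻¹' A)`, which is a limit of a sequence in `f ⁻¹' A`.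
Finally `[0,1] × I` with `I` discrete is first countable, hence Fréchet–Urysohn.
-/

namespace Topology

variable {X Y : Type*} [TopologicalSpace X] [TopologicalSpace Y] {f : X → Y}

theorem IsCoinducing.isClosedMap_of_collapse {Z : Set X} (hf : IsCoinducing f)
    (hZ : IsClosed Z) (hfib : ∀ p q, f p = f q ↔ (p ∈ Z ∧ q ∈ Z) ∨ p = q) :
    IsClosedMap f := by
  intro F hF
  rw [← hf.isClosed_preimage]
  by_cases hFZ : (F ∩ Z).Nonempty
  · obtain ⟨z, hzF, hzZ⟩ := hFZ
    convert hF.union hZ using 1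
    ext p
    refine ⟨fun ⟨q, hqF, hqp⟩ => ?_, ?_⟩
    · rcases (hfib q p).mp hqp with ⟨-, hpZ⟩ | rfl
      exacts [Or.inr hpZ, Or.inl hqF]
    · rintro (hpF | hpZ)
      exacts [⟨p, hpF, rfl⟩, ⟨z, hzF, (hfib z p).mpr (Or.inl ⟨hzZ, hpZ⟩)⟩]
  · convert hF using 1
    ext p
    refine ⟨fun ⟨q, hqF, hqp⟩ => ?_, fun hpF => ⟨p, hpF, rfl⟩⟩
    rcases (hfib q p).mp hqp with ⟨hqZ, -⟩ | rfl
    exacts [absurd ⟨q, hqF, hqZ⟩ hFZ, hqF]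

end Topology

theorem IsClosedMap.frechetUrysohnSpace {X Y : Type*} [TopologicalSpace X] [TopologicalSpace Y]
    [FrechetUrysohnSpace X] {f : X → Y} (hclosed : IsClosedMap f) (hcont : Continuous f)
    (hsurj : Function.Surjective f) : FrechetUrysohnSpace Y := by
  refine ⟨fun A y hy => ?_⟩
  have hlift : closure A ⊆ f '' closure (f ⁻¹' A) := by
    calc closure A = closure (f '' (f ⁻¹' A)) := by rw [Set.image_preimage_eq A hsurj]
      _ ⊆ f '' closure (f ⁻¹' A) := hclosed.closure_image_subset _
  obtain ⟨x, hx, rfl⟩ := hlift hy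
  obtain ⟨u, huA, hux⟩ := mem_closure_iff_seq_limit.mp hx
  exact ⟨f ∘ u, huA, (hcont.tendsto x).comp hux⟩

/-- The quotient hedgehog `J(κ)` is a Fréchet–Urysohn space: every point of the closure of
a subset `A` is the limit of a sequence of points of `A`. -/
theorem quotHedgehog_frechetUrysohn (I : Type u) :
    ∀ (A : Set (Hedgehog I)) (x : Hedgehog I),
      x ∈ @closure _ (quotHedgehogTop I) A →
        ∃ u : ℕ → Hedgehog I, (∀ n, u n ∈ A) ∧
          Filter.Tendsto u Filter.atTop (@nhds _ (quotHedgehogTop I) x) := by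
  let _ : TopologicalSpace I := ⊥
  have : DiscreteTopology I := ⟨rfl⟩
  let _ : TopologicalSpace (Hedgehog I) := quotHedgehogTop I
  have hq : IsQuotientMap (Quotient.mk (hedgehogSetoid I)) := ⟨⟨rfl⟩, Quotient.mk_surjective⟩
  have hcenter : IsClosed {p : Set.Icc (0:ℝ) 1 × I | (p.1 : ℝ) = 0} :=
    isClosed_eq (continuous_subtype_val.comp continuous_fst) continuous_const
  have hclosed : IsClosedMap (Quotient.mk (hedgehogSetoid I)) :=
    hq.isCoinducing.isClosedMap_of_collapse hcenter fun _ _ => Quotient.eq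
  have : FrechetUrysohnSpace (Hedgehog I) :=
    hclosed.frechetUrysohnSpace hq.continuous hq.surjective
  exact fun A x hx => mem_closure_iff_seq_limit.mp hx
end
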